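/- Let H be an S_1-free cgh on Ω_n and let u ∈ Ω_n. Then there exists a vertex m ∈ Ω_n with m ≠ u such that every edge of the link graph G_u that does not contain m has exactly one endpoint in each of the two open arcs of Ω_n determined by u and m; equivalently, G_u − m is bipartite with its two parts contained in the two disjoint open arcs determined by u and m. -/

import Mathlib

/-!
Measure positions by the clockwise distance `(v - u).val` from `u` and orient each edge of the
link of `u` from its nearer to its farther endpoint. Take `m` to be a farther endpoint at minimal
distance. An edge avoiding `m` ends beyond `m` by minimality, and it starts before `m`, for
otherwise it would follow the edge ending at `m` and the two triples would form an `S₁` at `u`.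
-/

/-- The list of points of `ZMod n` occurs in this clockwise cyclic order:
anchored at the first point, the clockwise arc-distances from it are
positive and strictly increasing. -/
def CWList (n : ℕ) : List (ZMod n) → Prop
  | [] => True
  | a :: l => ((0 : ℕ) :: l.map fun b => (b - a).val).Chain' (· < ·)

/-- `H` is a 3-uniform (convex geometric) hypergraph on `Ω_n = ZMod n`. -/
def IsCgh (n : ℕ) (H : Finset (Finset (ZMod n))) : Prop :=
  ∀ e ∈ H, e.card = 3

def nabla (n : ℕ) : ℕ :=
  if Odd n then n * (n - 1) * (n + 1) / 24 else n * (n - 2) * (n + 2) / 24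

/-- `H` contains a copy of the configuration `S₁`: two triples sharing exactly
the vertex `v`, with the five vertices in clockwise cyclic order `v, a₁, a₂, b₁, b₂`. -/
def HasS1 (n : ℕ) (H : Finset (Finset (ZMod n))) : Prop :=
  ∃ v a₁ a₂ b₁ b₂ : ZMod n,
    CWList n [v, a₁, a₂, b₁, b₂] ∧
    ({v, a₁, a₂} : Finset (ZMod n)) ∈ H ∧ ({v, b₁, b₂} : Finset (ZMod n)) ∈ H

section

variable {n : ℕ}

theorem cwList_three_iff (a b c : ZMod n) :
    CWList n [a, b, c] ↔ 0 < (b - a).val ∧ (b - a).val < (c - a).val := by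
  simp only [CWList, List.Chain', List.map_cons, List.map_nil, List.isChain_cons_cons,
    List.isChain_singleton, and_true]

theorem cwList_five_iff (a b c d e : ZMod n) :
    CWList n [a, b, c, d, e] ↔ 0 < (b - a).val ∧ (b - a).val < (c - a).val ∧
      (c - a).val < (d - a).val ∧ (d - a).val < (e - a).val := by
  simp only [CWList, List.Chain', List.map_cons, List.map_nil, List.isChain_cons_cons,
    List.isChain_singleton, and_true]

theorem IsCgh.ne_of_mem {H : Finset (Finset (ZMod n))} (hcgh : IsCgh n H) {u w x : ZMod n}
    (h : ({u, w, x} : Finset (ZMod n)) ∈ H) : u ≠ w ∧ u ≠ x ∧ w ≠ x := by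
  have h3 := hcgh _ h
  refine ⟨?_, ?_, ?_⟩ <;> rintro rfl <;>
    simp only [Finset.mem_insert, Finset.mem_singleton, true_or, or_true,
      Finset.insert_eq_of_mem] at h3 <;>
    exact absurd h3 (Finset.card_le_two.trans_lt (by norm_num)).ne

theorem CWList.rotate_three [NeZero n] {a b c : ZMod n} (h : CWList n [a, b, c]) :
    CWList n [b, c, a] := by
  rw [cwList_three_iff] at h ⊢
  obtain ⟨hb, hbc⟩ := h
  have hcb : (c - b).val = (c - a).val - (b - a).val := by
    rw [← ZMod.val_sub hbc.le, sub_sub_sub_cancel_right]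
  have hab : (a - b).val = n - (b - a).val := by
    rw [← neg_sub, ZMod.neg_val, if_neg (ZMod.val_pos.mp hb)]
  have := ZMod.val_lt (c - a)
  omega

theorem val_sub_left_injective [NeZero n] (u : ZMod n) :
    Function.Injective fun v : ZMod n => (v - u).val :=
  fun _ _ h => sub_left_injective (ZMod.val_injective n h)

theorem hasS1_of_val_sub_lt {H : Finset (Finset (ZMod n))} {u w x y z : ZMod n}
    (hwx : ({u, w, x} : Finset (ZMod n)) ∈ H) (hyz : ({u, y, z} : Finset (ZMod n)) ∈ H)
    (hw : 0 < (w - u).val) (h₁ : (w - u).val < (x - u).val) (h₂ : (x - u).val < (y - u).val)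
    (h₃ : (y - u).val < (z - u).val) : HasS1 n H :=
  ⟨u, w, x, y, z, (cwList_five_iff ..).mpr ⟨hw, h₁, h₂, h₃⟩, hwx, hyz⟩

theorem val_sub_le_of_not_hasS1 {H : Finset (Finset (ZMod n))} (hcgh : IsCgh n H)
    (hfree : ¬ HasS1 n H) {u w x y z : ZMod n}
    (hwx : ({u, w, x} : Finset (ZMod n)) ∈ H) (hyz : ({u, y, z} : Finset (ZMod n)) ∈ H)
    (h₁ : (w - u).val < (x - u).val) (h₃ : (y - u).val < (z - u).val) :
    (y - u).val ≤ (x - u).val := by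
  by_contra! h₂
  have hw : 0 < (w - u).val := ZMod.val_pos.mpr (sub_ne_zero.mpr (hcgh.ne_of_mem hwx).1.symm)
  exact hfree (hasS1_of_val_sub_lt hwx hyz hw h₁ h₂ h₃)

theorem cwList_arcs_of_val_sub_lt [NeZero n] {u w m x : ZMod n} (hw : 0 < (w - u).val)
    (hwm : (w - u).val < (m - u).val) (hmx : (m - u).val < (x - u).val) :
    CWList n [u, w, m] ∧ CWList n [m, x, u] :=
  ⟨(cwList_three_iff ..).mpr ⟨hw, hwm⟩,
    ((cwList_three_iff ..).mpr ⟨hw.trans hwm, hmx⟩).rotate_three⟩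

theorem exists_separating_vertex [NeZero n] [Fact (1 < n)] {H : Finset (Finset (ZMod n))}
    (hcgh : IsCgh n H) (hfree : ¬ HasS1 n H) (u : ZMod n) :
    ∃ m : ZMod n, m ≠ u ∧ ∀ w x : ZMod n, ({u, w, x} : Finset (ZMod n)) ∈ H → w ≠ m → x ≠ m →
      (w - u).val < (x - u).val → CWList n [u, w, m] ∧ CWList n [m, x, u] := by
  set R : Set (ZMod n) :=
    {x | ∃ w, ({u, w, x} : Finset (ZMod n)) ∈ H ∧ (w - u).val < (x - u).val}
  rcases R.eq_empty_or_nonempty with hR | hR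
  · refine ⟨u + 1, by simp, fun w x hwx _ _ hlt => ?_⟩
    exact absurd (show x ∈ R from ⟨w, hwx, hlt⟩) (hR ▸ Set.notMem_empty x)
  obtain ⟨m, ⟨w₀, hw₀m, hlt₀⟩, hmin⟩ := R.exists_min_image (fun x => (x - u).val) R.toFinite hR
  refine ⟨m, fun h => by simp [h] at hlt₀, fun w x hwx hwm hxm hlt => ?_⟩
  have hw : 0 < (w - u).val := ZMod.val_pos.mpr (sub_ne_zero.mpr (hcgh.ne_of_mem hwx).1.symm)
  have hmx : (m - u).val < (x - u).val :=
    (hmin x ⟨w, hwx, hlt⟩).lt_of_ne ((val_sub_left_injective u).ne hxm.symm)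
  have hwm : (w - u).val < (m - u).val :=
    (val_sub_le_of_not_hasS1 hcgh hfree hw₀m hwx hlt₀ hlt).lt_of_ne
      ((val_sub_left_injective u).ne hwm)
  exact cwList_arcs_of_val_sub_lt hw hwm hmx

end

theorem link_almost_bipartite (n : ℕ) (hn : 3 ≤ n)
    (H : Finset (Finset (ZMod n))) (hcgh : IsCgh n H) (hfree : ¬ HasS1 n H)
    (u : ZMod n) :
    ∃ m : ZMod n, m ≠ u ∧
      ∀ w x : ZMod n, ({u, w, x} : Finset (ZMod n)) ∈ H → w ≠ m → x ≠ m →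
        ((CWList n [u, w, m] ∧ CWList n [m, x, u]) ∨
         (CWList n [m, w, u] ∧ CWList n [u, x, m])) := by
  have : NeZero n := ⟨by omega⟩
  have : Fact (1 < n) := ⟨by omega⟩
  obtain ⟨m, hmu, hm⟩ := exists_separating_vertex hcgh hfree u
  refine ⟨m, hmu, fun w x hwx hwm hxm => ?_⟩
  rcases ((val_sub_left_injective u).ne (hcgh.ne_of_mem hwx).2.2).lt_or_gt with hlt | hlt
  · exact Or.inl (hm w x hwx hwm hxm hlt)
  · exact Or.inr (hm x w (Finset.pair_comm w x ▸ hwx) hxm hwm hlt).symm
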